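/- arXiv:0712.3678 — 3 statements merged into one kernel-verified Lean document; each statement's English description precedes it below -/
import Mathlib

section
/- Discrete Poincaré inequality (Lemma 3.1): Let M > 0. There exists a constant β > 0 depending only on d, r and M (in particular independent of h ∈ (0,1] and of the offset v) such that for every h ∈ (0,1] and every finitely supported grid function u : ℤ^d → ℝ satisfying u_m = 0 whenever the grid-knot x_m lies outside the cube [−M, M]^d, one has q_R(u) ≥ β² ( |u|²_{R2} + q_R(u) ). -/
noncomputable section

/-- `vol(R) = r₁ ⋯ r_d`. -/
def volR (d : ℕ) (r : Fin d → ℕ) : ℝ := ∏ i, (r i : ℝ)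

/-- Forward finite difference `(U_i u)_m = (u_{m+e_i} - u_m)/(r_i h)`. -/
def fdiff (d : ℕ) (h : ℝ) (r : Fin d → ℕ) (u : (Fin d → ℤ) → ℝ) (i : Fin d)
    (m : Fin d → ℤ) : ℝ :=
  (u (m + Pi.single i 1) - u m) / ((r i : ℝ) * h)

/-- The discrete norm `|u|²_{R2} = vol(R) Σ_m u_m²`. -/
def norm2R (d : ℕ) (r : Fin d → ℕ) (u : (Fin d → ℤ) → ℝ) : ℝ :=
  volR d r * ∑' m : Fin d → ℤ, u m ^ 2

/-- The discrete Dirichlet form `q_R(u) = vol(R) Σ_i Σ_m (U_i u)_m²`. -/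
def qR (d : ℕ) (h : ℝ) (r : Fin d → ℕ) (u : (Fin d → ℤ) → ℝ) : ℝ :=
  volR d r * ∑ i : Fin d, ∑' m : Fin d → ℤ, (fdiff d h r u i m) ^ 2

/-!
Fix a coordinate direction `i`. On every grid line parallel to `eᵢ` the support condition
confines `u` to a run of `N` consecutive knots with `N rᵢ h ≤ 2M + rᵢ h`. As `u` vanishes just
before the run, each value is a telescoping sum of at most `N` differences, so Cauchy–Schwarz
gives `Σ u² ≤ N² Σ (Δu)² = (N rᵢ h)² Σ (Uᵢ u)²` along the line. Summing over the lines,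
`|u|²_{R2} ≤ C q_R(u)` with `C = (2M + rᵢ)²` for `h ≤ 1`, whence
`q_R(u) ≥ (1 + C)⁻¹ (|u|²_{R2} + q_R(u))`.
-/

open Finset Function

theorem Int.sum_Ico_sub {G : Type*} [AddCommGroup G] (f : ℤ → G) {a b : ℤ} (hab : a ≤ b) :
    ∑ j ∈ Ico a b, (f (j + 1) - f j) = f b - f a := by
  induction b, hab using Int.leInduction with
  | base => simp
  | succ k hk ih =>
    rw [← insert_Ico_right_eq_Ico_add_one hk, sum_insert (by simp), ih]
    abel

theorem finite_support_sub_comp_add {G : Type*} [AddGroup G] {f : G → ℝ}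
    (hf : f.support.Finite) (c : G) : (support fun x => f (x + c) - f x).Finite :=
  ((hf.preimage (add_left_injective c).injOn).union hf).subset (support_sub _ _)

theorem summable_sq_of_finite_support {α : Type*} {f : α → ℝ} (hf : f.support.Finite) :
    Summable fun x => f x ^ 2 :=
  summable_of_hasFiniteSupport (HasFiniteSupport.fun_comp (g := (· ^ 2)) hf (zero_pow two_ne_zero))

theorem tsum_sq_le_sq_mul_tsum_sq_sub {f : ℤ → ℝ} {a : ℤ} {N : ℕ}
    (hf : ∀ k ∉ Ioc a (a + N), f k = 0) :
    ∑' k, f k ^ 2 ≤ N ^ 2 * ∑' k, (f (k + 1) - f k) ^ 2 := by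
  set D := ∑' k, (f (k + 1) - f k) ^ 2
  have hfin : f.support.Finite :=
    (Ioc a (a + N)).finite_toSet.subset fun k hk => by_contra fun h => hk (hf k h)
  have hD : Summable fun k => (f (k + 1) - f k) ^ 2 :=
    summable_sq_of_finite_support (finite_support_sub_comp_add hfin 1)
  have hpt : ∀ k ∈ Ioc a (a + N), f k ^ 2 ≤ N * D := by
    intro k hk
    obtain ⟨hak, hkN⟩ := mem_Ioc.mp hk
    have htel : f k = ∑ j ∈ Ico a k, (f (j + 1) - f j) := by
      rw [Int.sum_Ico_sub f hak.le, hf a (by simp), sub_zero]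
    have hcard : (#(Ico a k) : ℝ) ≤ N := by
      rw [Int.card_Ico]
      exact_mod_cast (by omega : (k - a).toNat ≤ N)
    calc f k ^ 2 ≤ #(Ico a k) * ∑ j ∈ Ico a k, (f (j + 1) - f j) ^ 2 :=
          htel ▸ sq_sum_le_card_mul_sum_sq
      _ ≤ N * D := by
          gcongr
          exact hD.sum_le_tsum _ fun _ _ => sq_nonneg _
  calc ∑' k, f k ^ 2 = ∑ k ∈ Ioc a (a + N), f k ^ 2 := tsum_eq_sum fun k hk => by simp [hf k hk]
    _ ≤ ∑ _k ∈ Ioc a (a + N), N * D := sum_le_sum hpt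
    _ = N ^ 2 * D := by simp [Int.card_Ioc]; ring

theorem exists_Ioc_of_abs_add_mul_le (c : ℝ) {t M : ℝ} (ht : 0 < t) (hM : 0 ≤ M) :
    ∃ (a : ℤ) (N : ℕ), N * t ≤ 2 * M + t ∧ ∀ k : ℤ, |c + t * k| ≤ M → k ∈ Ioc a (a + N) := by
  set x := (-M - c) / t
  refine ⟨⌈x⌉ - 1, ⌊2 * M / t⌋₊ + 1, ?_, fun k hk => ?_⟩
  · have : (⌊2 * M / t⌋₊ : ℝ) * t ≤ 2 * M :=
      (le_div_iff₀ ht).mp (Nat.floor_le (by positivity))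
    push_cast
    linarith
  · obtain ⟨hlo, hhi⟩ := abs_le.mp hk
    have hxk : x ≤ k := by rw [div_le_iff₀ ht]; linarith
    have hceil : ⌈x⌉ ≤ k := Int.ceil_le.mpr hxk
    obtain ⟨n, hn⟩ : ∃ n : ℕ, k = ⌈x⌉ + n := ⟨(k - ⌈x⌉).toNat, by omega⟩
    have : n ≤ ⌊2 * M / t⌋₊ := by
      refine Nat.le_floor ?_
      have h1 : (k : ℝ) = ⌈x⌉ + n := by exact_mod_cast hn
      have h2 : x * t = -M - c := div_mul_cancel₀ _ ht.ne'
      rw [le_div_iff₀ ht]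
      nlinarith [mul_le_mul_of_nonneg_right (Int.le_ceil x) ht.le]
    rw [mem_Ioc]
    push_cast
    omega

theorem Equiv.funSplitAt_symm_add_single {ι α : Type*} [DecidableEq ι] [AddZeroClass α] (i : ι)
    (a b : α) (y : { j // j ≠ i } → α) :
    (funSplitAt i α).symm (a, y) + Pi.single i b = (funSplitAt i α).symm (a + b, y) := by
  ext j
  by_cases hj : j = i
  · subst hj; simp
  · simp [hj]

theorem tsum_le_tsum_of_forall_line_le {ι α : Type*} [DecidableEq ι] (i : ι)
    {F G : (ι → α) → ℝ} (hF : Summable F) (hG : Summable G)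
    (hline : ∀ y, ∑' a, F ((Equiv.funSplitAt i α).symm (a, y)) ≤
      ∑' a, G ((Equiv.funSplitAt i α).symm (a, y))) :
    ∑' m, F m ≤ ∑' m, G m := by
  set e := (Equiv.funSplitAt i α).trans (Equiv.prodComm _ _)
  have hF' : Summable fun p => F (e.symm p) := e.symm.summable_iff.mpr hF
  have hG' : Summable fun p => G (e.symm p) := e.symm.summable_iff.mpr hG
  rw [← e.symm.tsum_eq F, ← e.symm.tsum_eq G, hF'.tsum_prod, hG'.tsum_prod]
  exact Summable.tsum_le_tsum hline hF'.prod hG'.prod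

theorem volR_nonneg (d : ℕ) (r : Fin d → ℕ) : 0 ≤ volR d r :=
  prod_nonneg fun _ _ => Nat.cast_nonneg _

theorem qR_nonneg (d : ℕ) (h : ℝ) (r : Fin d → ℕ) (u : (Fin d → ℤ) → ℝ) : 0 ≤ qR d h r u :=
  mul_nonneg (volR_nonneg d r) (sum_nonneg fun _ _ => tsum_nonneg fun _ => sq_nonneg _)

theorem finite_support_fdiff {d : ℕ} {u : (Fin d → ℤ) → ℝ} (hu : u.support.Finite)
    (h : ℝ) (r : Fin d → ℕ) (i : Fin d) : (support (fdiff d h r u i)).Finite :=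
  HasFiniteSupport.fun_comp (g := (· / (r i * h)))
    (finite_support_sub_comp_add hu (Pi.single i 1)) (zero_div _)

theorem fdiff_funSplitAt_symm (d : ℕ) (h : ℝ) (r : Fin d → ℕ) (u : (Fin d → ℤ) → ℝ) (i : Fin d)
    (k : ℤ) (y : { j // j ≠ i } → ℤ) :
    fdiff d h r u i ((Equiv.funSplitAt i ℤ).symm (k, y)) =
      (u ((Equiv.funSplitAt i ℤ).symm (k + 1, y)) - u ((Equiv.funSplitAt i ℤ).symm (k, y))) /
        (r i * h) := by
  rw [fdiff, Equiv.funSplitAt_symm_add_single]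

theorem tsum_sq_le_mul_tsum_fdiff_sq {d : ℕ} {h M : ℝ} {r : Fin d → ℕ} {v : Fin d → ℝ}
    {u : (Fin d → ℤ) → ℝ} (i : Fin d) (hh : 0 < h) (hr : 0 < r i) (hM : 0 ≤ M)
    (hu : u.support.Finite) (hsupp : ∀ m, u m ≠ 0 → |v i + h * r i * m i| ≤ M) :
    ∑' m, u m ^ 2 ≤ (2 * M + h * r i) ^ 2 * ∑' m, fdiff d h r u i m ^ 2 := by
  rw [← tsum_mul_left]
  refine tsum_le_tsum_of_forall_line_le i (summable_sq_of_finite_support hu)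
    ((summable_sq_of_finite_support (finite_support_fdiff hu h r i)).mul_left _) fun y => ?_
  set L := fun k => (Equiv.funSplitAt i ℤ).symm (k, y)
  have ht : 0 < h * r i := by positivity
  obtain ⟨a, N, hN, hwin⟩ := exists_Ioc_of_abs_add_mul_le (v i) ht hM
  have hline : ∀ k ∉ Ioc a (a + N), u (L k) = 0 := fun k hk => by_contra fun hne =>
    hk (hwin k (by simpa [L] using hsupp _ hne))
  calc ∑' k, u (L k) ^ 2 ≤ N ^ 2 * ∑' k, (u (L (k + 1)) - u (L k)) ^ 2 :=
        tsum_sq_le_sq_mul_tsum_sq_sub hline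
    _ = (N * (h * r i)) ^ 2 * ∑' k, fdiff d h r u i (L k) ^ 2 := by
        rw [← tsum_mul_left, ← tsum_mul_left]
        refine tsum_congr fun k => ?_
        dsimp only [L]
        rw [fdiff_funSplitAt_symm]
        field_simp
    _ ≤ (2 * M + h * r i) ^ 2 * ∑' k, fdiff d h r u i (L k) ^ 2 := by
        gcongr
    _ = ∑' k, (2 * M + h * r i) ^ 2 * fdiff d h r u i (L k) ^ 2 := tsum_mul_left.symm

theorem norm2R_le_mul_qR {d : ℕ} {h M : ℝ} {r : Fin d → ℕ} {v : Fin d → ℝ}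
    {u : (Fin d → ℤ) → ℝ} (i : Fin d) (hh : 0 < h) (hr : 0 < r i) (hM : 0 ≤ M)
    (hu : u.support.Finite) (hsupp : ∀ m, u m ≠ 0 → |v i + h * r i * m i| ≤ M) :
    norm2R d r u ≤ (2 * M + h * r i) ^ 2 * qR d h r u := by
  have hslice := tsum_sq_le_mul_tsum_fdiff_sq i hh hr hM hu hsupp
  have hsum : ∑' m, fdiff d h r u i m ^ 2 ≤ ∑ j, ∑' m, fdiff d h r u j m ^ 2 :=
    single_le_sum (f := fun j => ∑' m, fdiff d h r u j m ^ 2)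
      (fun _ _ => tsum_nonneg fun _ => sq_nonneg _) (mem_univ i)
  rw [norm2R, qR, mul_left_comm]
  gcongr
  · exact volR_nonneg d r
  · exact hslice.trans (by gcongr)

/-- Discrete Poincaré inequality (Lemma 3.1): for grid functions supported in the cube
`[-M,M]^d` one has `q_R(u) ≥ β² (|u|²_{R2} + q_R(u))` with `β > 0` depending only on
`d`, `r` and `M` (independent of `h ∈ (0,1]` and of the offset `v`). -/
theorem discrete_poincare (d : ℕ) (hd : 1 ≤ d) (r : Fin d → ℕ) (hr : ∀ i, 0 < r i)
    (M : ℝ) (hM : 0 < M) :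
    ∃ β : ℝ, 0 < β ∧
      ∀ h : ℝ, 0 < h → h ≤ 1 →
        ∀ v : Fin d → ℝ, ∀ u : (Fin d → ℤ) → ℝ,
          (Function.support u).Finite →
          (∀ m : Fin d → ℤ, ¬ (∀ i, |v i + h * (r i : ℝ) * (m i : ℝ)| ≤ M) → u m = 0) →
          qR d h r u ≥ β ^ 2 * (norm2R d r u + qR d h r u) := by
  let i₀ : Fin d := ⟨0, hd⟩
  set C := (2 * M + r i₀) ^ 2
  refine ⟨(√(1 + C))⁻¹, by positivity, fun h hh hh1 v u hu hsupp => ?_⟩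
  have hslab : ∀ m, u m ≠ 0 → |v i₀ + h * r i₀ * m i₀| ≤ M := fun m hm =>
    by_contra fun hout => hm (hsupp m fun hall => hout (hall i₀))
  have hnq : norm2R d r u ≤ C * qR d h r u := by
    refine (norm2R_le_mul_qR i₀ hh (hr i₀) hM.le hu hslab).trans
      (mul_le_mul_of_nonneg_right ?_ (qR_nonneg d h r u))
    show _ ≤ (2 * M + r i₀) ^ 2
    gcongr
    exact mul_le_of_le_one_left (Nat.cast_nonneg _) hh1
  have hq := qR_nonneg d h r u
  rw [inv_pow, Real.sq_sqrt (by positivity), ge_iff_le, inv_mul_le_iff₀ (by positivity)]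
  linarith
end
end

section
/- The bounded linear operator S on ℓ²(ℤ, ℂ) defined by (S u)_k = (2/3) u_k + (1/6)(u_{k+1} + u_{k−1}) is self-adjoint and its spectrum is exactly the real interval [1/3, 1] (viewed as a subset of ℂ). -/
/-!
Write `T` for the bilateral shift `(T u)_k = u_{k+1}`, a unitary. Then
`S = 2/3 + (T + T⋆)/6 = f(T)` in the continuous functional calculus, with the symbol
`f z = 2/3 + (z + z̄)/6`. Since `f` is real-valued, `S` is self-adjoint, and by the spectral mapping
theorem `σ(S) = f(σ(T))`. The spectrum of `T` is the whole unit circle: for `|z| = 1` the truncated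
geometric sequences `(z^k)_{0 ≤ k < n}` have norm `√n` while `T - z` maps them to vectors of norm
at most `2`. Finally `f z = 2/3 + (Re z)/3` on the circle, which sweeps out `[1/3, 1]`.
-/

open scoped ENNReal

noncomputable section

theorem Memℓp.comp_equiv {α β E : Type*} [NormedAddCommGroup E] {p : ℝ≥0∞} {f : α → E}
    (hf : Memℓp f p) (σ : β ≃ α) : Memℓp (f ∘ σ) p := by
  rcases p.trichotomy with rfl | rfl | hp
  · exact memℓp_zero (hf.finite_dsupport.preimage σ.injective.injOn)
  · exact memℓp_infty (σ.surjective.range_comp (fun i => ‖f i‖) ▸ hf.bddAbove)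
  · exact memℓp_gen (σ.summable_iff.mpr (hf.summable hp))

namespace lp

variable {α β : Type*} (𝕜 : Type*) {E : Type*} [NormedField 𝕜] [NormedAddCommGroup E]
  [NormedSpace 𝕜 E] {p : ℝ≥0∞} [Fact (1 ≤ p)]

def compEquiv (σ : β ≃ α) : lp (fun _ : α => E) p ≃ₗᵢ[𝕜] lp (fun _ : β => E) p where
  toFun f := ⟨f ∘ σ, (lp.memℓp f).comp_equiv σ⟩
  invFun g := ⟨g ∘ σ.symm, (lp.memℓp g).comp_equiv σ.symm⟩
  map_add' _ _ := rfl
  map_smul' _ _ := rfl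
  left_inv f := lp.ext (by simp [Function.comp_def])
  right_inv g := lp.ext (by simp [Function.comp_def])
  norm_map' f := by
    rcases eq_or_ne p ∞ with rfl | hp
    · rw [lp.norm_eq_ciSup, lp.norm_eq_ciSup]
      exact σ.iSup_comp (g := fun i => ‖f i‖)
    · have hp' : 0 < p.toReal := ENNReal.toReal_pos (zero_lt_one.trans_le Fact.out).ne' hp
      rw [lp.norm_eq_tsum_rpow hp', lp.norm_eq_tsum_rpow hp']
      exact congrArg (· ^ (1 / p.toReal)) (σ.tsum_eq fun i => ‖f i‖ ^ p.toReal)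

theorem compEquiv_apply (σ : β ≃ α) (f : lp (fun _ : α => E) p) (i : β) :
    compEquiv 𝕜 σ f i = f (σ i) := rfl

theorem compEquiv_symm_apply (σ : β ≃ α) (g : lp (fun _ : β => E) p) (i : α) :
    (compEquiv 𝕜 σ).symm g i = g (σ.symm i) := rfl

theorem compEquiv_single [DecidableEq α] [DecidableEq β] (σ : β ≃ α) (i : α) (c : E) :
    compEquiv 𝕜 σ (lp.single p i c) = lp.single p (σ.symm i) c := by
  ext j
  simp [compEquiv_apply, lp.single_apply, Pi.single_apply, σ.eq_symm_apply]

end lp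

theorem ContinuousLinearMap.mem_spectrum_of_forall_exists_lt {𝕜 E : Type*}
    [NontriviallyNormedField 𝕜] [NormedAddCommGroup E] [NormedSpace 𝕜 E] {a : E →L[𝕜] E} {z : 𝕜}
    (h : ∀ C : ℝ, ∃ x : E, C * ‖a x - z • x‖ < ‖x‖) : z ∈ spectrum 𝕜 a := by
  rintro ⟨u, hu⟩
  obtain ⟨x, hx⟩ := h ‖(↑u⁻¹ : E →L[𝕜] E)‖
  have hux : (u : E →L[𝕜] E) x = -(a x - z • x) := by
    simp [hu, Algebra.algebraMap_eq_smul_one]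
  have hinv : (↑u⁻¹ : E →L[𝕜] E) ((u : E →L[𝕜] E) x) = x := congr($(u.inv_mul) x)
  have := (↑u⁻¹ : E →L[𝕜] E).le_opNorm ((u : E →L[𝕜] E) x)
  rw [hinv, hux, norm_neg] at this
  exact (this.trans_lt hx).false

local notation "ℓ²(ℤ)" => lp (fun _ : ℤ => ℂ) 2

def bilateralShift : ℓ²(ℤ) ≃ₗᵢ[ℂ] ℓ²(ℤ) := lp.compEquiv ℂ (Equiv.addRight 1)

theorem bilateralShift_apply (u : ℓ²(ℤ)) (k : ℤ) : bilateralShift u k = u (k + 1) :=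
  lp.compEquiv_apply ℂ _ u k

theorem bilateralShift_symm_apply (u : ℓ²(ℤ)) (k : ℤ) : bilateralShift.symm u k = u (k - 1) := by
  simp [bilateralShift, lp.compEquiv_symm_apply, sub_eq_add_neg]

theorem bilateralShift_single (k : ℤ) (c : ℂ) :
    bilateralShift (lp.single 2 k c) = lp.single 2 (k - 1) c := by
  simp [bilateralShift, lp.compEquiv_single, sub_eq_add_neg]

theorem bilateralShift_mem_unitary : (bilateralShift : ℓ²(ℤ) →L[ℂ] ℓ²(ℤ)) ∈ unitary _ :=
  (Unitary.linearIsometryEquiv.symm bilateralShift).prop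

def truncatedGeometric (z : ℂ) (n : ℕ) : ℓ²(ℤ) :=
  ∑ i ∈ Finset.range n, lp.single 2 (i : ℤ) (z ^ i)

theorem norm_truncatedGeometric_sq {z : ℂ} (hz : ‖z‖ = 1) (n : ℕ) :
    ‖truncatedGeometric z n‖ ^ 2 = n := by
  have := lp.norm_sum_single (p := 2) (by norm_num) (fun i : ℤ => z ^ i)
    ((Finset.range n).map Nat.castEmbedding)
  simpa [truncatedGeometric, norm_zpow, hz] using this

theorem bilateralShift_truncatedGeometric_sub_smul (z : ℂ) (n : ℕ) :
    bilateralShift (truncatedGeometric z n) - z • truncatedGeometric z n =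
      lp.single 2 (-1) 1 - lp.single 2 ((n : ℤ) - 1) (z ^ n) := by
  set g : ℕ → ℓ²(ℤ) := fun i => lp.single 2 ((i : ℤ) - 1) (z ^ i)
  calc _ = ∑ i ∈ Finset.range n, (g i - g (i + 1)) := by
        simp only [truncatedGeometric, map_sum, Finset.smul_sum, ← Finset.sum_sub_distrib,
          bilateralShift_single, ← lp.single_smul, g]
        push_cast
        simp [pow_succ']
    _ = g 0 - g n := Finset.sum_range_sub' g n
    _ = _ := by simp [g]

theorem norm_bilateralShift_truncatedGeometric_sub_smul_le {z : ℂ} (hz : ‖z‖ = 1) (n : ℕ) :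
    ‖bilateralShift (truncatedGeometric z n) - z • truncatedGeometric z n‖ ≤ 2 := by
  rw [bilateralShift_truncatedGeometric_sub_smul]
  refine (norm_sub_le _ _).trans_eq ?_
  rw [lp.norm_single (by norm_num), lp.norm_single (by norm_num), norm_pow, hz]
  norm_num

theorem spectrum_bilateralShift :
    spectrum ℂ (bilateralShift : ℓ²(ℤ) →L[ℂ] ℓ²(ℤ)) = Metric.sphere 0 1 := by
  refine (spectrum.subset_circle_of_unitary bilateralShift_mem_unitary).antisymm fun z hz => ?_
  rw [mem_sphere_zero_iff_norm] at hz
  refine ContinuousLinearMap.mem_spectrum_of_forall_exists_lt fun C => ?_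
  obtain ⟨n, hn⟩ := exists_nat_gt (4 * C ^ 2)
  refine ⟨truncatedGeometric z n, lt_of_pow_lt_pow_left₀ 2 (norm_nonneg _) ?_⟩
  have := norm_bilateralShift_truncatedGeometric_sub_smul_le hz n
  rw [norm_truncatedGeometric_sq hz]
  calc _ = C ^ 2 * ‖bilateralShift (truncatedGeometric z n) - z • truncatedGeometric z n‖ ^ 2 :=
        mul_pow ..
    _ ≤ C ^ 2 * 2 ^ 2 := by gcongr
    _ < n := by linarith

def toeplitzSymbol (z : ℂ) : ℂ := 2 / 3 + 1 / 6 * (z + star z)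

@[fun_prop]
theorem continuous_toeplitzSymbol : Continuous toeplitzSymbol := by
  unfold toeplitzSymbol
  fun_prop

theorem star_toeplitzSymbol (z : ℂ) : star (toeplitzSymbol z) = toeplitzSymbol z := by
  simp only [toeplitzSymbol, star_add, star_mul, star_star, star_div₀, star_one, star_ofNat]
  ring

theorem toeplitzSymbol_eq_ofReal (z : ℂ) : toeplitzSymbol z = ((2 / 3 + z.re / 3 : ℝ) : ℂ) := by
  rw [toeplitzSymbol, Complex.star_def, Complex.add_conj]
  push_cast
  ring

theorem image_sphere_toeplitzSymbol :
    toeplitzSymbol '' Metric.sphere 0 1 = Complex.ofReal '' Set.Icc (1 / 3 : ℝ) 1 := by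
  ext w
  simp only [Set.mem_image, mem_sphere_zero_iff_norm, toeplitzSymbol_eq_ofReal]
  constructor
  · rintro ⟨z, hz, rfl⟩
    have := abs_le.mp (hz ▸ Complex.abs_re_le_norm z)
    exact ⟨_, ⟨by linarith, by linarith⟩, rfl⟩
  · rintro ⟨t, ⟨ht₁, ht₂⟩, rfl⟩
    refine ⟨Complex.exp (Real.arccos (3 * t - 2) * Complex.I),
      Complex.norm_exp_ofReal_mul_I _, ?_⟩
    rw [Complex.exp_ofReal_mul_I_re, Real.cos_arccos (by linarith) (by linarith)]
    ring_nf

theorem cfc_toeplitzSymbol {A : Type*} [CStarAlgebra A] (a : A) [IsStarNormal a] :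
    cfc toeplitzSymbol a = algebraMap ℂ A (2 / 3) + (1 / 6 : ℂ) • (a + star a) := by
  change cfc (fun z : ℂ => 2 / 3 + 1 / 6 * (z + star z)) a = _
  rw [cfc_const_add .., cfc_const_mul .., cfc_add .., cfc_id' .., cfc_star_id ..]

theorem eq_algebraMap_add_smul_bilateralShift_add_star {S : ℓ²(ℤ) →L[ℂ] ℓ²(ℤ)}
    (hS : ∀ u : ℓ²(ℤ), ∀ k : ℤ, (S u : ℤ → ℂ) k =
      (2 / 3 : ℂ) * (u : ℤ → ℂ) k + (1 / 6 : ℂ) * ((u : ℤ → ℂ) (k + 1) + (u : ℤ → ℂ) (k - 1))) :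
    S = algebraMap ℂ _ (2 / 3) + (1 / 6 : ℂ) •
      ((bilateralShift : ℓ²(ℤ) →L[ℂ] ℓ²(ℤ)) + star (bilateralShift : ℓ²(ℤ) →L[ℂ] ℓ²(ℤ))) := by
  refine ContinuousLinearMap.ext fun u => lp.ext (funext fun k => ?_)
  simp only [Algebra.algebraMap_eq_smul_one, LinearIsometryEquiv.star_eq_symm, add_apply,
    smul_apply, one_apply_eq_self, lp.coeFn_add, lp.coeFn_smul, ContinuousLinearEquiv.coe_coe,
    LinearIsometryEquiv.coe_toContinuousLinearEquiv]
  rw [Pi.add_apply, Pi.smul_apply, Pi.smul_apply, Pi.add_apply, hS, smul_eq_mul, smul_eq_mul,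
    bilateralShift_apply, bilateralShift_symm_apply]

/-- The symmetric tridiagonal Toeplitz operator `(S u)_k = (2/3) u_k + (1/6)(u_{k+1} + u_{k-1})`
on `ℓ²(ℤ, ℂ)` is self-adjoint and its spectrum is exactly the real interval `[1/3, 1]`. -/
theorem toeplitz_selfAdjoint_spectrum
    (S : lp (fun _ : ℤ => ℂ) 2 →L[ℂ] lp (fun _ : ℤ => ℂ) 2)
    (hS : ∀ u : lp (fun _ : ℤ => ℂ) 2, ∀ k : ℤ,
      (S u : ℤ → ℂ) k =
        (2 / 3 : ℂ) * (u : ℤ → ℂ) k +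
          (1 / 6 : ℂ) * ((u : ℤ → ℂ) (k + 1) + (u : ℤ → ℂ) (k - 1))) :
    IsSelfAdjoint S ∧
      spectrum ℂ S = Complex.ofReal '' Set.Icc (1 / 3 : ℝ) 1 := by
  have := isStarNormal_of_mem_unitary bilateralShift_mem_unitary
  have hS_cfc : S = cfc toeplitzSymbol (bilateralShift : ℓ²(ℤ) →L[ℂ] ℓ²(ℤ)) := by
    rw [cfc_toeplitzSymbol, eq_algebraMap_add_smul_bilateralShift_add_star hS]
  refine ⟨?_, ?_⟩
  · rw [hS_cfc, IsSelfAdjoint, ← cfc_star]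
    simp only [star_toeplitzSymbol]
  · rw [hS_cfc, cfc_map_spectrum .., spectrum_bilateralShift, image_sphere_toeplitzSymbol]

end
end

section
/- Lemma 3.4: For every square-summable grid function u : ℤ^d → ℝ, the hat-function imbedding u(n) = Σ_m u_m ψ_m satisfies 3^{−d} · h^d |u|²_{R2} ≤ ‖u(n)‖²_{L²(ℝ^d)} ≤ h^d |u|²_{R2}; that is, the conclusion of the lemma holds with σ² = 1 − 3^{−d} ∈ (0,1), uniformly in h and in the offset v. -/
/-!
Expanding the square, `‖Σ u_m ψ_m‖² = h^d vol(R) Σ_{m,m'} u_m u_{m'} ∏_i G(m'_i - m_i)`, where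
`G(0) = 2/3`, `G(±1) = 1/6` (and `0` otherwise) is the Gram sequence of the hat function.
Regrouping the pairs by grid cells, the double sum is `Σ_n q(c_n)`, where `c_n` lists the values
of `u` at the `2^d` corners of the cell `n + [0,1]^d` and `q` is the `d`-fold tensor power of the
mass matrix `[[1/3, 1/6], [1/6, 1/3]]` of the linear element. That matrix lies between `I/6` and
`I/2`, so `6^{-d} |c|² ≤ q(c) ≤ 2^{-d} |c|²`; as every knot is a corner of exactly `2^d` cells,
`Σ_n |c_n|² = 2^d Σ_m u_m²`, which yields the constants `3^{-d}` and `1`.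
-/

open MeasureTheory

noncomputable section

/-- The canonical hat function on `ℝ`, centered at the origin with support `[-1,1]`. -/
def hat (t : ℝ) : ℝ := max 0 (1 - |t|)

/-- The `i`-th coordinate of the grid-knot `x_m = v + h * r * m` of the grid `G_n(R)`. -/
def gridKnot (d : ℕ) (h : ℝ) (r : Fin d → ℕ) (v : Fin d → ℝ) (m : Fin d → ℤ) (i : Fin d) : ℝ :=
  v i + h * (r i : ℝ) * (m i : ℝ)

/-- The `d`-dimensional hat function centered at the grid-knot `x_m`. -/
def psi (d : ℕ) (h : ℝ) (r : Fin d → ℕ) (v : Fin d → ℝ) (m : Fin d → ℤ) (x : Fin d → ℝ) : ℝ :=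
  ∏ i, hat ((x i - gridKnot d h r v m i) / (h * (r i : ℝ)))

/-- The hat-function imbedding `u(n) = Σ_m u_m ψ_m` of a grid function. -/
def imbed (d : ℕ) (h : ℝ) (r : Fin d → ℕ) (v : Fin d → ℝ) (u : (Fin d → ℤ) → ℝ)
    (x : Fin d → ℝ) : ℝ :=
  ∑' m : Fin d → ℤ, u m * psi d h r v m x

open Set Function

lemma prod_sum_sum_eq_sum_sum_prod {ι β R : Type*} [Fintype ι] [DecidableEq ι] [Fintype β]
    [CommSemiring R] (f : ι → β → β → R) :
    ∏ i, ∑ b, ∑ b', f i b b' = ∑ ε : ι → β, ∑ ε' : ι → β, ∏ i, f i (ε i) (ε' i) := by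
  simp_rw [← Fintype.sum_prod_type', Fintype.prod_sum]
  exact Fintype.sum_equiv (Equiv.arrowProdEquivProdArrow _ _ _) _ _ fun _ => rfl

lemma sum_sum_ite_comp_eq_mul_nonneg {κ β : Type*} [Fintype κ] [Fintype β] [DecidableEq β]
    (f : κ → β) (c : κ → ℝ) : 0 ≤ ∑ a, ∑ a', if f a = f a' then c a * c a' else 0 := by
  set g : β → ℝ := fun b => ∑ a with f a = b, c a
  have hfiber : ∑ a, ∑ a', (if f a = f a' then c a * c a' else 0) = ∑ b, g b * g b :=
    calc ∑ a, ∑ a', (if f a = f a' then c a * c a' else 0) = ∑ a, c a * g (f a) := by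
          simp only [g, Finset.mul_sum, Finset.sum_filter, mul_ite, mul_zero]
          exact Finset.sum_congr rfl fun a _ =>
            Finset.sum_congr rfl fun a' _ => if_congr eq_comm rfl rfl
      _ = ∑ b, ∑ a with f a = b, c a * g (f a) := (Finset.sum_fiberwise _ _ _).symm
      _ = ∑ b, g b * g b := Finset.sum_congr rfl fun b _ => by
          rw [Finset.sum_congr rfl fun a ha => by rw [(Finset.mem_filter.1 ha).2],
            ← Finset.sum_mul]
  exact hfiber ▸ Finset.sum_nonneg fun b _ => mul_self_nonneg (g b)

lemma finite_setOf_abs_sub_intCast_lt_one (c : ℝ) : {n : ℤ | |c - n| < 1}.Finite := by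
  refine (Filter.eventually_cofinite.1 (Int.tendsto_coe_cofinite.eventually
    (isCompact_closedBall c 1).compl_mem_cocompact)).subset fun n hn => ?_
  simp only [mem_ofPred_eq, Metric.mem_closedBall, not_not, Real.dist_eq] at hn ⊢
  rw [abs_sub_comm]
  exact hn.le

section Shift

variable {α : Type*} [AddCommGroup α] {w : α → ℝ}

lemma summable_sq_shift (hw : Summable fun n => w n ^ 2) (a : α) :
    Summable fun n => w (n + a) ^ 2 :=
  hw.comp_injective (add_left_injective a)

lemma summable_mul_shift (hw : Summable fun n => w n ^ 2) (a b : α) :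
    Summable fun n => w (n + a) * w (n + b) := by
  refine Summable.of_norm_bounded
    (((summable_sq_shift hw a).add (summable_sq_shift hw b)).div_const 2) fun n => ?_
  rw [Real.norm_eq_abs, abs_mul]
  nlinarith [two_mul_le_add_sq |w (n + a)| |w (n + b)|, sq_abs (w (n + a)), sq_abs (w (n + b))]

lemma tsum_sq_shift (a : α) : ∑' n, w (n + a) ^ 2 = ∑' n, w n ^ 2 :=
  (Equiv.addRight a).tsum_eq fun n => w n ^ 2

lemma hasSum_ite_sub_eq [DecidableEq α] {f : α → α → ℝ} {a b : α} {s : ℝ}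
    (hs : HasSum (fun n => f (n + a) (n + b)) s) :
    HasSum (fun p : α × α => if p.2 - p.1 = b - a then f p.1 p.2 else 0) s := by
  refine (Injective.hasSum_iff (g := fun n => (n + a, n + b))
    (fun n n' hn => by simpa using congrArg Prod.fst hn)
    fun p hp => if_neg fun hpab => hp ⟨p.1 - a, ?_⟩).1 ?_
  · rw [sub_eq_iff_eq_add] at hpab
    ext
    · simp
    · simp only [hpab]
      abel
  · simpa [comp_def, add_sub_add_left_eq_sub] using hs

end Shift

lemma hat_nonneg (t : ℝ) : 0 ≤ hat t := le_max_left _ _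

lemma hat_eq_zero_of_one_le_abs {t : ℝ} (ht : 1 ≤ |t|) : hat t = 0 := max_eq_left (by linarith)

lemma hat_of_abs_le_one {t : ℝ} (ht : |t| ≤ 1) : hat t = 1 - |t| := max_eq_right (by linarith)

lemma abs_lt_one_of_hat_ne_zero {t : ℝ} (ht : hat t ≠ 0) : |t| < 1 :=
  not_le.1 fun h => ht (hat_eq_zero_of_one_le_abs h)

lemma abs_lt_one_of_hat_mul_hat_ne_zero {s t : ℝ} (h : hat s * hat t ≠ 0) :
    |s| < 1 ∧ |t| < 1 :=
  ⟨abs_lt_one_of_hat_ne_zero (left_ne_zero_of_mul h),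
    abs_lt_one_of_hat_ne_zero (right_ne_zero_of_mul h)⟩

lemma continuous_hat : Continuous hat := by unfold hat; fun_prop

lemma hasCompactSupport_hat_comp {s : ℝ} (hs : 0 < s) (a : ℝ) :
    HasCompactSupport fun x => hat ((x - a) / s) := by
  refine HasCompactSupport.intro (isCompact_Icc (a := a - s) (b := a + s)) fun x hx => ?_
  rw [mem_Icc, not_and_or, not_le, not_le] at hx
  refine hat_eq_zero_of_one_le_abs ?_
  rw [abs_div, abs_of_pos hs, le_div_iff₀ hs, one_mul, le_abs']
  rcases hx with hx | hx
  · left; linarith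
  · right; linarith

open intervalIntegral in
lemma integral_hat_mul_self : ∫ y, hat y * hat y = 2 / 3 := by
  have hsupp : support (fun y => hat y * hat y) ⊆ Ioc (-1) 1 := fun y hy => by
    have := abs_lt.1 (abs_lt_one_of_hat_mul_hat_ne_zero hy).1
    exact ⟨this.1, this.2.le⟩
  have hcont : Continuous fun y => hat y * hat y := continuous_hat.mul continuous_hat
  have hint := hcont.intervalIntegrable (μ := volume)
  have hleft : EqOn (fun y => hat y * hat y) (fun y => (1 + y) ^ 2) (uIcc (-1) 0) := by
    intro y hy
    obtain ⟨hy₀, hy₁⟩ : -1 ≤ y ∧ y ≤ 0 := by simpa [uIcc_of_le] using hy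
    simp only
    rw [hat_of_abs_le_one (abs_le.2 ⟨hy₀, by linarith⟩), abs_of_nonpos hy₁]
    ring
  have hright : EqOn (fun y => hat y * hat y) (fun y => (1 - y) ^ 2) (uIcc 0 1) := by
    intro y hy
    obtain ⟨hy₀, hy₁⟩ : 0 ≤ y ∧ y ≤ 1 := by simpa [uIcc_of_le] using hy
    simp only
    rw [hat_of_abs_le_one (abs_le.2 ⟨by linarith, hy₁⟩), abs_of_nonneg hy₀]
    ring
  rw [← integral_eq_integral_of_support_subset hsupp,
    ← integral_add_adjacent_intervals (hint (-1) 0) (hint 0 1),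
    integral_congr hleft, integral_congr hright]
  norm_num [integral_comp_add_left fun y => y ^ 2, integral_comp_sub_left fun y => y ^ 2]

open intervalIntegral in
lemma integral_hat_mul_hat_sub_one : ∫ y, hat y * hat (y - 1) = 1 / 6 := by
  have hsupp : support (fun y => hat y * hat (y - 1)) ⊆ Ioc 0 1 := fun y hy => by
    obtain ⟨h₁, h₂⟩ := abs_lt_one_of_hat_mul_hat_ne_zero hy
    rw [abs_lt] at h₁ h₂
    exact ⟨by linarith, by linarith⟩
  have hpoly : EqOn (fun y => hat y * hat (y - 1)) (fun y => y - y ^ 2) (uIcc 0 1) := by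
    intro y hy
    obtain ⟨hy₀, hy₁⟩ : 0 ≤ y ∧ y ≤ 1 := by simpa [uIcc_of_le] using hy
    simp only
    rw [hat_of_abs_le_one (abs_le.2 ⟨by linarith, hy₁⟩), abs_of_nonneg hy₀,
      hat_of_abs_le_one (abs_le.2 ⟨by linarith, by linarith⟩), abs_of_nonpos (by linarith)]
    ring
  rw [← integral_eq_integral_of_support_subset hsupp, integral_congr hpoly]
  norm_num [intervalIntegral.integral_sub, integral_pow]

def hatGram (k : ℤ) : ℝ := if k = 0 then 2 / 3 else if k = 1 ∨ k = -1 then 1 / 6 else 0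

lemma integral_hat_mul_hat_sub (k : ℤ) : ∫ y, hat y * hat (y - k) = hatGram k := by
  rcases (show k = 0 ∨ k = 1 ∨ k = -1 ∨ 2 ≤ |k| by rw [le_abs]; omega)
    with rfl | rfl | rfl | hk
  · simpa [hatGram] using integral_hat_mul_self
  · simpa [hatGram] using integral_hat_mul_hat_sub_one
  · have hshift := integral_sub_right_eq_self (μ := volume) (fun y => hat y * hat (y + 1)) 1
    simp only [sub_add_cancel] at hshift
    simp [hatGram, ← hshift, mul_comm, integral_hat_mul_hat_sub_one]
  · have hzero : ∀ y : ℝ, hat y * hat (y - k) = 0 := fun y => by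
      by_contra hy
      obtain ⟨h₁, h₂⟩ := abs_lt_one_of_hat_mul_hat_ne_zero hy
      have : (2 : ℝ) ≤ |(k : ℝ)| := by exact_mod_cast hk
      linarith [abs_sub_abs_le_abs_sub (k : ℝ) y, abs_sub_comm (k : ℝ) y]
    have hk₀ : k ≠ 0 := by rintro rfl; simp at hk
    have hk₁ : ¬(k = 1 ∨ k = -1) := by rintro (rfl | rfl) <;> simp at hk
    simp [hzero, hatGram, hk₀, hk₁]

lemma integral_hat_mul_hat_scaled {s : ℝ} (hs : 0 < s) (a : ℝ) (k : ℤ) :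
    ∫ x, hat ((x - a) / s) * hat ((x - (a + s * k)) / s) = s * hatGram k := by
  have hshift : ∀ x, (x - (a + s * k)) / s = (x - a) / s - k := fun x => by field_simp; ring
  simp_rw [hshift]
  rw [integral_sub_right_eq_self (μ := volume) (fun x => hat (x / s) * hat (x / s - k)) a,
    Measure.integral_comp_div (fun y => hat y * hat (y - k)), integral_hat_mul_hat_sub,
    abs_of_pos hs, smul_eq_mul]

section Psi

variable {d : ℕ} {h : ℝ} {r : Fin d → ℕ} (v : Fin d → ℝ)

lemma psi_nonneg (m : Fin d → ℤ) (x : Fin d → ℝ) : 0 ≤ psi d h r v m x :=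
  Finset.prod_nonneg fun _ _ => hat_nonneg _

variable (hh : 0 < h) (hr : ∀ i, 0 < r i)
include hh hr

lemma mesh_pos (i : Fin d) : 0 < h * (r i : ℝ) := mul_pos hh (Nat.cast_pos.2 (hr i))

lemma integrable_psi_mul_psi (m m' : Fin d → ℤ) :
    Integrable fun x => psi d h r v m x * psi d h r v m' x := by
  simp only [psi, ← Finset.prod_mul_distrib]
  refine Integrable.fintype_prod (f := fun i y => hat ((y - gridKnot d h r v m i) / (h * r i)) *
    hat ((y - gridKnot d h r v m' i) / (h * r i))) fun i => ?_
  exact ((continuous_hat.comp (by fun_prop)).mul (continuous_hat.comp (by fun_prop)))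
    |>.integrable_of_hasCompactSupport (hasCompactSupport_hat_comp (mesh_pos hh hr i) _).mul_right

lemma integral_psi_mul_psi (m m' : Fin d → ℤ) :
    ∫ x, psi d h r v m x * psi d h r v m' x = h ^ d * volR d r * ∏ i, hatGram ((m' - m) i) := by
  simp only [psi, ← Finset.prod_mul_distrib]
  rw [integral_fintype_prod_volume_eq_prod (fun i y =>
    hat ((y - gridKnot d h r v m i) / (h * r i)) * hat ((y - gridKnot d h r v m' i) / (h * r i)))]
  have hknot : ∀ i, gridKnot d h r v m' i = gridKnot d h r v m i + h * r i * ((m' - m) i : ℝ) :=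
    fun i => by simp only [gridKnot, Pi.sub_apply]; push_cast; ring
  simp_rw [hknot, integral_hat_mul_hat_scaled (mesh_pos hh hr _), Finset.prod_mul_distrib,
    Finset.prod_const, Finset.card_univ, Fintype.card_fin, volR]

lemma finite_support_psi (x : Fin d → ℝ) : (support fun m => psi d h r v m x).Finite := by
  refine (Set.Finite.pi fun i =>
    finite_setOf_abs_sub_intCast_lt_one ((x i - v i) / (h * (r i : ℝ)))).subset
    fun m hm => mem_univ_pi.2 fun i => ?_
  have hne := abs_lt_one_of_hat_ne_zero (Finset.prod_ne_zero_iff.1 hm i (Finset.mem_univ i))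
  have := hh.ne'
  have : (r i : ℝ) ≠ 0 := Nat.cast_ne_zero.2 (hr i).ne'
  have hcoord : (x i - gridKnot d h r v m i) / (h * r i) = (x i - v i) / (h * r i) - m i := by
    unfold gridKnot; field_simp; ring
  rwa [hcoord] at hne

end Psi

-- `∫₀¹ (1 - t)² = ∫₀¹ t² = 1/3` and `∫₀¹ t (1 - t) = 1/6`: the mass matrix of the two linear
-- shape functions on a unit interval.
def cornerWeight (b b' : Bool) : ℝ := if b = b' then 1 / 3 else 1 / 6

lemma hatGram_eq_sum_cornerWeight (k : ℤ) :
    hatGram k = ∑ b, ∑ b', cornerWeight b b' * if k = b'.toInt - b.toInt then 1 else 0 := by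
  rcases (show k = 0 ∨ k = 1 ∨ k = -1 ∨ (k ≠ 0 ∧ k ≠ 1 ∧ k ≠ -1) by omega)
    with rfl | rfl | rfl | ⟨h₀, h₁, h₂⟩
  all_goals simp [hatGram, cornerWeight, Bool.toInt, *, Ne.symm]
  all_goals norm_num

section Cell

variable {ι : Type*} [Fintype ι]

def corner (ε : ι → Bool) : ι → ℤ := fun i => (ε i).toInt

def cellWeight (ε ε' : ι → Bool) : ℝ := ∏ i, cornerWeight (ε i) (ε' i)

lemma cellWeight_comm (ε ε' : ι → Bool) : cellWeight ε ε' = cellWeight ε' ε := by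
  simp only [cellWeight, cornerWeight, eq_comm]

lemma cellWeight_nonneg (ε ε' : ι → Bool) : 0 ≤ cellWeight ε ε' :=
  Finset.prod_nonneg fun _ _ => by unfold cornerWeight; split_ifs <;> norm_num

lemma cellWeight_eq_sum_powerset (ε ε' : ι → Bool) :
    cellWeight ε ε' = (1 / 6) ^ Fintype.card ι *
      ∑ T ∈ (Finset.univ : Finset ι).powerset, if ∀ i ∈ T, ε i = ε' i then 1 else 0 := by
  have hcorner : ∀ i, cornerWeight (ε i) (ε' i) = 1 / 6 * (1 + if ε i = ε' i then 1 else 0) :=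
    fun i => by unfold cornerWeight; split_ifs <;> norm_num
  simp_rw [cellWeight, hcorner, Finset.prod_mul_distrib, Finset.prod_one_add, Finset.prod_boole,
    Finset.prod_const, Finset.card_univ]

variable [DecidableEq ι]

lemma prod_hatGram_eq_sum_cellWeight (k : ι → ℤ) :
    ∏ i, hatGram (k i) =
      ∑ ε, ∑ ε', cellWeight ε ε' * if k = corner ε' - corner ε then 1 else 0 := by
  simp_rw [hatGram_eq_sum_cornerWeight, prod_sum_sum_eq_sum_sum_prod, Finset.prod_mul_distrib,
    Finset.prod_boole]
  simp [cellWeight, corner, funext_iff]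

lemma sum_cellWeight_right (ε : ι → Bool) :
    ∑ ε', cellWeight ε ε' = (1 / 2) ^ Fintype.card ι := by
  have hrow : ∀ b, ∑ b', cornerWeight b b' = 1 / 2 := fun b => by
    cases b <;> simp [cornerWeight] <;> norm_num
  simp only [cellWeight]
  rw [← Fintype.prod_sum (fun i b => cornerWeight (ε i) b)]
  simp_rw [hrow, Finset.prod_const, Finset.card_univ]

-- The integral, over a unit cell, of the square of the multilinear interpolant of the corner
-- values `c`.
def cellForm (c : (ι → Bool) → ℝ) : ℝ := ∑ ε, ∑ ε', cellWeight ε ε' * c ε * c ε'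

lemma cellForm_le (c : (ι → Bool) → ℝ) :
    cellForm c ≤ (1 / 2) ^ Fintype.card ι * ∑ ε, c ε ^ 2 := by
  have hterm : ∀ ε ε', cellWeight ε ε' * c ε * c ε' ≤
      (cellWeight ε ε' * c ε ^ 2 + cellWeight ε' ε * c ε' ^ 2) / 2 := fun ε ε' => by
    rw [cellWeight_comm ε' ε]
    nlinarith [mul_le_mul_of_nonneg_left (two_mul_le_add_sq (c ε) (c ε')) (cellWeight_nonneg ε ε')]
  calc cellForm c ≤ ∑ ε, ∑ ε', (cellWeight ε ε' * c ε ^ 2 + cellWeight ε' ε * c ε' ^ 2) / 2 :=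
        Finset.sum_le_sum fun ε _ => Finset.sum_le_sum fun ε' _ => hterm ε ε'
    _ = ∑ ε, ∑ ε', cellWeight ε ε' * c ε ^ 2 := by
        simp_rw [← Finset.sum_div, Finset.sum_add_distrib]
        rw [Finset.sum_comm (f := fun ε ε' => cellWeight ε' ε * c ε' ^ 2)]
        ring
    _ = _ := by simp_rw [← Finset.sum_mul, sum_cellWeight_right, Finset.mul_sum]

lemma le_cellForm (c : (ι → Bool) → ℝ) :
    (1 / 6) ^ Fintype.card ι * ∑ ε, c ε ^ 2 ≤ cellForm c := by
  set Q : Finset ι → ℝ := fun T => ∑ ε, ∑ ε', if ∀ i ∈ T, ε i = ε' i then c ε * c ε' else 0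
  -- `Q T` is a sum of squares over the fibres of `ε ↦ ε|_T`.
  have hQ : ∀ T, 0 ≤ Q T := fun T => by
    simpa [Q, Finset.restrict, funext_iff] using sum_sum_ite_comp_eq_mul_nonneg T.restrict c
  have hQuniv : Q Finset.univ = ∑ ε, c ε ^ 2 := by
    have hall : ∀ ε ε' : ι → Bool, (∀ i ∈ Finset.univ, ε i = ε' i) ↔ ε = ε' := by
      simp [funext_iff]
    simp only [Q, hall]
    simp [sq]
  have hform : cellForm c = (1 / 6) ^ Fintype.card ι * ∑ T ∈ Finset.univ.powerset, Q T := by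
    simp only [cellForm, cellWeight_eq_sum_powerset, Q, Finset.mul_sum, Finset.sum_mul]
    refine (Finset.sum_congr rfl fun ε _ => Finset.sum_comm).trans (Finset.sum_comm.trans ?_)
    refine Finset.sum_congr rfl fun T _ => Finset.sum_congr rfl fun ε _ =>
      Finset.sum_congr rfl fun ε' _ => ?_
    split_ifs <;> ring
  rw [hform, ← hQuniv]
  exact mul_le_mul_of_nonneg_left
    (Finset.single_le_sum (fun T _ => hQ T) (Finset.mem_powerset_self _)) (by positivity)

end Cell

section CellSum

variable {ι : Type*} [Fintype ι] [DecidableEq ι] {w : (ι → ℤ) → ℝ}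
  (hw : Summable fun n => w n ^ 2)
include hw

lemma hasSum_cellForm :
    HasSum (fun n => cellForm fun ε => w (n + corner ε))
      (∑ ε, ∑ ε', cellWeight ε ε' * ∑' n, w (n + corner ε) * w (n + corner ε')) := by
  simp_rw [cellForm, mul_assoc]
  exact hasSum_sum fun ε _ => hasSum_sum fun ε' _ =>
    (summable_mul_shift hw _ _).hasSum.mul_left _

lemma hasSum_mul_prod_hatGram :
    HasSum (fun p : (ι → ℤ) × (ι → ℤ) => w p.1 * w p.2 * ∏ i, hatGram ((p.2 - p.1) i))
      (∑' n, cellForm fun ε => w (n + corner ε)) := by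
  have hterm : ∀ p : (ι → ℤ) × (ι → ℤ), w p.1 * w p.2 * ∏ i, hatGram ((p.2 - p.1) i) =
      ∑ ε, ∑ ε', cellWeight ε ε' *
        if p.2 - p.1 = corner ε' - corner ε then w p.1 * w p.2 else 0 := fun p => by
    simp_rw [prod_hatGram_eq_sum_cellWeight, Finset.mul_sum, mul_ite, mul_one, mul_zero]
    exact Finset.sum_congr rfl fun ε _ => Finset.sum_congr rfl fun ε' _ => by split_ifs <;> ring
  simp_rw [hterm, (hasSum_cellForm hw).tsum_eq]
  exact hasSum_sum fun ε _ => hasSum_sum fun ε' _ =>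
    (hasSum_ite_sub_eq (f := fun x y => w x * w y) (summable_mul_shift hw _ _).hasSum).mul_left _

lemma summable_sum_sq_corner : Summable fun n => ∑ ε, w (n + corner ε) ^ 2 :=
  summable_sum fun _ _ => summable_sq_shift hw _

lemma tsum_sum_sq_corner :
    ∑' n, ∑ ε, w (n + corner ε) ^ 2 = 2 ^ Fintype.card ι * ∑' n, w n ^ 2 := by
  rw [Summable.tsum_finsetSum fun _ _ => summable_sq_shift hw _]
  simp [tsum_sq_shift]

lemma le_tsum_cellForm :
    3⁻¹ ^ Fintype.card ι * ∑' n, w n ^ 2 ≤ ∑' n, cellForm fun ε => w (n + corner ε) :=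
  calc 3⁻¹ ^ Fintype.card ι * ∑' n, w n ^ 2
      = ∑' n, (1 / 6) ^ Fintype.card ι * ∑ ε, w (n + corner ε) ^ 2 := by
        rw [tsum_mul_left, tsum_sum_sq_corner hw, ← mul_assoc, ← mul_pow]; norm_num
    _ ≤ _ := Summable.tsum_le_tsum (fun n => le_cellForm _)
        ((summable_sum_sq_corner hw).mul_left _) (hasSum_cellForm hw).summable

lemma tsum_cellForm_le : ∑' n, cellForm (fun ε => w (n + corner ε)) ≤ ∑' n, w n ^ 2 :=
  calc ∑' n, cellForm (fun ε => w (n + corner ε))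
      ≤ ∑' n, (1 / 2) ^ Fintype.card ι * ∑ ε, w (n + corner ε) ^ 2 :=
        Summable.tsum_le_tsum (fun n => cellForm_le _) (hasSum_cellForm hw).summable
          ((summable_sum_sq_corner hw).mul_left _)
    _ = ∑' n, w n ^ 2 := by
        rw [tsum_mul_left, tsum_sum_sq_corner hw, ← mul_assoc, ← mul_pow]; norm_num

end CellSum

section Imbed

variable {d : ℕ} {h : ℝ} {r : Fin d → ℕ} (v : Fin d → ℝ) (u : (Fin d → ℤ) → ℝ)
  (hh : 0 < h) (hr : ∀ i, 0 < r i)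
include hh hr

lemma imbed_sq_eq_tsum (x : Fin d → ℝ) :
    imbed d h r v u x ^ 2 = ∑' p : (Fin d → ℤ) × (Fin d → ℤ),
      u p.1 * u p.2 * (psi d h r v p.1 x * psi d h r v p.2 x) := by
  have hsum : Summable fun m => ‖u m * psi d h r v m x‖ :=
    summable_of_hasFiniteSupport <| (finite_support_psi v hh hr x).subset fun m hm =>
      right_ne_zero_of_mul (norm_ne_zero_iff.1 hm)
  rw [imbed, sq, tsum_mul_tsum_of_summable_norm hsum hsum]
  exact tsum_congr fun p => by ring

lemma integral_imbed_sq (hu : Summable fun m => u m ^ 2) :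
    ∫ x, imbed d h r v u x ^ 2 =
      h ^ d * volR d r * ∑' n, cellForm fun ε => u (n + corner ε) := by
  set F : (Fin d → ℤ) × (Fin d → ℤ) → (Fin d → ℝ) → ℝ :=
    fun p x => u p.1 * u p.2 * (psi d h r v p.1 x * psi d h r v p.2 x)
  have hint : ∀ p, ∫ x, F p x =
      h ^ d * volR d r * (u p.1 * u p.2 * ∏ i, hatGram ((p.2 - p.1) i)) := fun p => by
    simp only [F]
    rw [integral_const_mul, integral_psi_mul_psi v hh hr]
    ring
  have hnorm : ∀ p, ∫ x, ‖F p x‖ =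
      h ^ d * volR d r * (|u p.1| * |u p.2| * ∏ i, hatGram ((p.2 - p.1) i)) := fun p => by
    simp_rw [F, norm_mul, Real.norm_eq_abs, abs_of_nonneg (psi_nonneg v _ _), ← abs_mul]
    rw [integral_const_mul, integral_psi_mul_psi v hh hr, abs_mul]
    ring
  have habs : Summable fun m => |u m| ^ 2 := by simpa only [sq_abs] using hu
  calc ∫ x, imbed d h r v u x ^ 2 = ∫ x, ∑' p, F p x := by
        congr 1 with x
        exact imbed_sq_eq_tsum v u hh hr x
    _ = ∑' p, ∫ x, F p x := by
        have hFint : ∀ p, Integrable (F p) := fun p =>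
          (integrable_psi_mul_psi v hh hr p.1 p.2).const_mul (u p.1 * u p.2)
        refine (integral_tsum_of_summable_integral_norm hFint ?_).symm
        simp_rw [hnorm]
        exact (hasSum_mul_prod_hatGram habs).summable.mul_left _
    _ = _ := by simp_rw [hint]; rw [tsum_mul_left, (hasSum_mul_prod_hatGram hu).tsum_eq]

end Imbed

theorem imbed_L2_norm_bounds_general (d : ℕ) (h : ℝ) (hh : 0 < h)
    (r : Fin d → ℕ) (hr : ∀ i, 0 < r i) (v : Fin d → ℝ)
    (u : (Fin d → ℤ) → ℝ) (hu : Summable (fun m : Fin d → ℤ => u m ^ 2)) :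
    ((3 : ℝ) ^ d)⁻¹ * (h ^ d * (volR d r * ∑' m : Fin d → ℤ, u m ^ 2)) ≤
        (∫ x : Fin d → ℝ, (imbed d h r v u x) ^ 2) ∧
      (∫ x : Fin d → ℝ, (imbed d h r v u x) ^ 2) ≤
        h ^ d * (volR d r * ∑' m : Fin d → ℤ, u m ^ 2) := by
  have hscale : 0 ≤ h ^ d * volR d r :=
    mul_nonneg (pow_nonneg hh.le d) (Finset.prod_nonneg fun i _ => Nat.cast_nonneg _)
  have hlower := le_tsum_cellForm hu
  rw [Fintype.card_fin] at hlower
  rw [integral_imbed_sq v u hh hr hu]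
  constructor
  · calc ((3 : ℝ) ^ d)⁻¹ * (h ^ d * (volR d r * ∑' m, u m ^ 2))
        = h ^ d * volR d r * (3⁻¹ ^ d * ∑' m, u m ^ 2) := by rw [inv_pow]; ring
      _ ≤ _ := mul_le_mul_of_nonneg_left hlower hscale
  · calc _ ≤ h ^ d * volR d r * ∑' m, u m ^ 2 :=
          mul_le_mul_of_nonneg_left (tsum_cellForm_le hu) hscale
      _ = _ := mul_assoc _ _ _

/-- Lemma 3.4: `3^{-d} h^d |u|²_{R2} ≤ ‖u(n)‖²_{L²} ≤ h^d |u|²_{R2}`,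
i.e. the lemma holds with `σ² = 1 - 3^{-d}`, uniformly in `h` and the offset `v`. -/
theorem imbed_L2_norm_bounds (d : ℕ) (hd : 1 ≤ d) (h : ℝ) (hh : 0 < h)
    (r : Fin d → ℕ) (hr : ∀ i, 0 < r i) (v : Fin d → ℝ)
    (u : (Fin d → ℤ) → ℝ) (hu : Summable (fun m : Fin d → ℤ => u m ^ 2)) :
    ((3 : ℝ) ^ d)⁻¹ * (h ^ d * (volR d r * ∑' m : Fin d → ℤ, u m ^ 2)) ≤
        (∫ x : Fin d → ℝ, (imbed d h r v u x) ^ 2) ∧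
      (∫ x : Fin d → ℝ, (imbed d h r v u x) ^ 2) ≤
        h ^ d * (volR d r * ∑' m : Fin d → ℤ, u m ^ 2) :=
  imbed_L2_norm_bounds_general d h hh r hr v u hu
end
end
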